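/- The number of vertically symmetric Dyck paths of length 2k (Dyck words fixed by reversal composed with up/down swap) equals C(k, k/2) if k is even and (1/2)*C(k+1, (k+1)/2) if k is odd. -/

import Mathlib

/-- Number of up-steps (`true`) among the first `i` steps of `w`. -/
def ups {n : ℕ} (w : Fin n → Bool) (i : ℕ) : ℕ :=
  (Finset.univ.filter fun j : Fin n => (j : ℕ) < i ∧ w j = true).card

/-- Number of down-steps (`false`) among the first `i` steps of `w`. -/
def downs {n : ℕ} (w : Fin n → Bool) (i : ℕ) : ℕ :=
  (Finset.univ.filter fun j : Fin n => (j : ℕ) < i ∧ w j = false).card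

/-- A left factor of a Dyck path: every prefix has at least as many ups as downs. -/
def IsLeftFactor {n : ℕ} (w : Fin n → Bool) : Prop :=
  ∀ i ≤ n, downs w i ≤ ups w i

/-- A Dyck word: a left factor with equally many ups and downs overall. -/
def IsDyckWord {n : ℕ} (w : Fin n → Bool) : Prop :=
  IsLeftFactor w ∧ ups w n = downs w n

/-- The involution on words reversing the word and swapping up-steps with down-steps. -/
def revSwap {n : ℕ} (w : Fin n → Bool) : Fin n → Bool := fun j => ! w j.rev

/-!
The path of a word fixed by `revSwap` is symmetric about its midpoint: the prefixes of lengths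
`i` and `2k - i` have the same height. So such a word is determined by its first half, and it is
a Dyck word exactly when that half is a left factor; the count is the number `L k` of left
factors of length `k`. Appending a letter to a left factor keeps it one unless a down-step
follows a balanced word, so `L (n + 1) = 2 L n - #{Dyck words of length n}`; with the Catalan
count of Dyck words this gives `L n = C(n, ⌊n/2⌋)`, and for odd `k` one has
`C(k + 1, (k + 1)/2) = 2 C(k, ⌊k/2⌋)`.
-/

section PrefixCounts

variable {n : ℕ}

lemma ups_zero (w : Fin n → Bool) : ups w 0 = 0 := by
  simp [ups]

lemma ups_succ (w : Fin n → Bool) {i : ℕ} (hi : i < n) :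
    ups w (i + 1) = ups w i + if w ⟨i, hi⟩ then 1 else 0 := by
  have last : (if w ⟨i, hi⟩ then 1 else 0) =
      ∑ j : Fin n, if j = ⟨i, hi⟩ then (if w j then 1 else 0) else 0 := by simp
  simp only [ups, Finset.card_filter, last, ← Finset.sum_add_distrib]
  refine Finset.sum_congr rfl fun j _ => ?_
  have := Fin.ext_iff (a := j) (b := ⟨i, hi⟩)
  split_ifs <;> grind

lemma downs_eq_ups_not (w : Fin n → Bool) (i : ℕ) : downs w i = ups (fun j => !w j) i := by
  simp [downs, ups]

lemma ups_add_downs (w : Fin n → Bool) {i : ℕ} (hi : i ≤ n) : ups w i + downs w i = i := by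
  have h := Finset.card_filter_add_card_filter_not
    (s := Finset.univ.filter fun j : Fin n => (j : ℕ) < i) (fun j => w j = true)
  simp only [Finset.filter_filter, Fin.card_filter_val_lt, Bool.not_eq_true] at h
  simpa [ups, downs, hi] using h

lemma ups_eq_of_agree {m : ℕ} (v : Fin m → Bool) (w : Fin n → Bool) {i : ℕ} (hm : i ≤ m)
    (hn : i ≤ n) (h : ∀ j (hj : j < i), v ⟨j, by omega⟩ = w ⟨j, by omega⟩) :
    ups v i = ups w i := by
  induction i with
  | zero => rw [ups_zero, ups_zero]
  | succ i ih =>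
    rw [ups_succ v hm, ups_succ w hn, ih (by omega) (by omega) fun j hj => h j (by omega),
      h i (by omega)]

lemma downs_eq_of_agree {m : ℕ} (v : Fin m → Bool) (w : Fin n → Bool) {i : ℕ} (hm : i ≤ m)
    (hn : i ≤ n) (h : ∀ j (hj : j < i), v ⟨j, by omega⟩ = w ⟨j, by omega⟩) :
    downs v i = downs w i := by
  have := ups_eq_of_agree v w hm hn h
  have := ups_add_downs v hm
  have := ups_add_downs w hn
  omega

lemma ups_eq_ups_add_ups_rev (w : Fin n → Bool) {i : ℕ} (hi : i ≤ n) :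
    ups w n = ups w (n - i) + ups (fun j => w j.rev) i := by
  induction i with
  | zero => rw [ups_zero, Nat.sub_zero, Nat.add_zero]
  | succ i ih =>
    have hrev : Fin.rev ⟨i, hi⟩ = ⟨n - (i + 1), by omega⟩ := Fin.ext (Fin.val_rev _)
    have split := ups_succ w (i := n - (i + 1)) (by omega)
    rw [show n - (i + 1) + 1 = n - i by omega] at split
    rw [ups_succ _ hi, hrev, ih (by omega), split]
    ring

end PrefixCounts

section Symmetric

variable {n : ℕ} {w : Fin n → Bool}

lemma apply_rev_of_revSwap_eq (h : revSwap w = w) (j : Fin n) : w j.rev = !w j := by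
  rw [← congrFun h j, revSwap, Bool.not_not]

lemma ups_eq_ups_add_downs_of_revSwap_eq (h : revSwap w = w) {i : ℕ} (hi : i ≤ n) :
    ups w n = ups w (n - i) + downs w i := by
  rw [ups_eq_ups_add_ups_rev w hi, downs_eq_ups_not]
  simp only [apply_rev_of_revSwap_eq h]

lemma downs_eq_downs_add_ups_of_revSwap_eq (h : revSwap w = w) {i : ℕ} (hi : i ≤ n) :
    downs w n = downs w (n - i) + ups w i := by
  have := ups_eq_ups_add_downs_of_revSwap_eq h hi
  have := ups_add_downs w le_rfl
  have := ups_add_downs w hi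
  have := ups_add_downs w (Nat.sub_le n i)
  omega

lemma ups_eq_downs_of_revSwap_eq (h : revSwap w = w) : ups w n = downs w n := by
  simpa [ups_zero] using ups_eq_ups_add_downs_of_revSwap_eq h le_rfl

end Symmetric

section Halves

variable {k : ℕ}

def firstHalf (w : Fin (2 * k) → Bool) : Fin k → Bool :=
  fun j => w (Fin.castLE (by omega) j)

def symmetrize (v : Fin k → Bool) : Fin (2 * k) → Bool := fun j =>
  if h : (j : ℕ) < k then v ⟨j, h⟩ else !v ⟨2 * k - 1 - j, by omega⟩

lemma revSwap_symmetrize (v : Fin k → Bool) : revSwap (symmetrize v) = symmetrize v := by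
  funext j
  have hrev := Fin.val_rev j
  by_cases hj : (j : ℕ) < k
  · simp only [revSwap, symmetrize, dif_neg (show ¬(j.rev : ℕ) < k by omega), dif_pos hj,
      Bool.not_not]
    congr
    omega
  · simp only [revSwap, symmetrize, dif_pos (show (j.rev : ℕ) < k by omega), dif_neg hj]
    congr
    omega

lemma firstHalf_symmetrize (v : Fin k → Bool) : firstHalf (symmetrize v) = v := by
  funext j
  simp [firstHalf, symmetrize]

lemma symmetrize_firstHalf {w : Fin (2 * k) → Bool} (h : revSwap w = w) :
    symmetrize (firstHalf w) = w := by
  funext j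
  by_cases hj : (j : ℕ) < k
  · simp [symmetrize, firstHalf, hj]
  · have hrev : Fin.castLE (by omega : k ≤ 2 * k) ⟨2 * k - 1 - j, by omega⟩ = j.rev := by
      ext
      simp only [Fin.val_castLE, Fin.val_rev]
      omega
    simp only [symmetrize, firstHalf, dif_neg hj]
    rw [hrev, apply_rev_of_revSwap_eq h, Bool.not_not]

def symmetricEquiv (k : ℕ) :
    {w : Fin (2 * k) → Bool // revSwap w = w} ≃ (Fin k → Bool) where
  toFun w := firstHalf w.1
  invFun v := ⟨symmetrize v, revSwap_symmetrize v⟩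
  left_inv w := Subtype.ext (symmetrize_firstHalf w.2)
  right_inv := firstHalf_symmetrize

lemma isDyckWord_iff_isLeftFactor_firstHalf {w : Fin (2 * k) → Bool} (h : revSwap w = w) :
    IsDyckWord w ↔ IsLeftFactor (firstHalf w) := by
  have ups_half {i} (hi : i ≤ k) : ups (firstHalf w) i = ups w i :=
    ups_eq_of_agree _ _ hi (by omega) fun _ _ => rfl
  have downs_half {i} (hi : i ≤ k) : downs (firstHalf w) i = downs w i :=
    downs_eq_of_agree _ _ hi (by omega) fun _ _ => rfl
  refine ⟨fun hw i hi => ?_, fun hv => ⟨fun i hi => ?_, ups_eq_downs_of_revSwap_eq h⟩⟩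
  · rw [ups_half hi, downs_half hi]
    exact hw.1 i (by omega)
  · by_cases hik : i ≤ k
    · rw [← ups_half hik, ← downs_half hik]
      exact hv i hik
    have hmirror := hv (2 * k - i) (by omega)
    rw [ups_half (by omega), downs_half (by omega)] at hmirror
    have := ups_eq_ups_add_downs_of_revSwap_eq h hi
    have := downs_eq_downs_add_ups_of_revSwap_eq h hi
    have := ups_eq_downs_of_revSwap_eq h
    omega

lemma card_symmetric_dyckWord_eq_card_leftFactor (k : ℕ) :
    Nat.card {w : Fin (2 * k) → Bool // IsDyckWord w ∧ revSwap w = w} =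
      Nat.card {v : Fin k → Bool // IsLeftFactor v} :=
  Nat.card_congr <| (Equiv.subtypeSubtypeEquivSubtype And.right).symm.trans <|
    (symmetricEquiv k).subtypeEquiv fun w =>
      (and_iff_left w.2).trans (isDyckWord_iff_isLeftFactor_firstHalf w.2)

end Halves

section DyckWords

open DyckStep

variable {n : ℕ}

def toSteps (w : Fin n → Bool) : List DyckStep :=
  List.ofFn fun j => if w j then U else D

lemma length_toSteps (w : Fin n → Bool) : (toSteps w).length = n :=
  List.length_ofFn

lemma count_take_toSteps (w : Fin n → Bool) {i : ℕ} (hi : i ≤ n) :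
    ((toSteps w).take i).count U = ups w i ∧ ((toSteps w).take i).count D = downs w i := by
  induction i with
  | zero => simp [ups_zero, downs_eq_ups_not]
  | succ i ih =>
    have hlen : i < (toSteps w).length := by rw [length_toSteps]; omega
    have hsucc := ups_succ w hi
    have := ups_add_downs w hi
    have := ups_add_downs w (i := i) (by omega)
    rw [List.take_add_one, List.getElem?_eq_getElem hlen, List.count_append, List.count_append,
      (ih (by omega)).1, (ih (by omega)).2]
    simp only [toSteps, List.getElem_ofFn, Option.toList_some]
    cases h : w ⟨i, hi⟩ <;> simp [h] at hsucc ⊢ <;> omega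

lemma isDyckWord_iff_toSteps (w : Fin n → Bool) :
    IsDyckWord w ↔ (toSteps w).count U = (toSteps w).count D ∧
      ∀ i, ((toSteps w).take i).count D ≤ ((toSteps w).take i).count U := by
  have key (i : ℕ) : ((toSteps w).take i).count U = ups w (min i n) ∧
      ((toSteps w).take i).count D = downs w (min i n) := by
    rw [List.take_eq_take_min, length_toSteps]
    exact count_take_toSteps w (min_le_right i n)
  have full := key n
  simp only [min_self, List.take_of_length_le (length_toSteps w).le] at full
  refine ⟨fun hw => ⟨?_, fun i => ?_⟩, fun hs => ⟨fun i hi => ?_, ?_⟩⟩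
  · rw [full.1, full.2, hw.2]
  · rw [(key i).1, (key i).2]
    exact hw.1 _ (min_le_right i n)
  · simpa [(key i).1, (key i).2, min_eq_left hi] using hs.2 i
  · rw [← full.1, ← full.2, hs.1]

def ofSteps (l : List DyckStep) (hl : l.length = n) : Fin n → Bool :=
  fun j => decide (l[(j : ℕ)] = U)

lemma toSteps_ofSteps (l : List DyckStep) (hl : l.length = n) : toSteps (ofSteps l hl) = l := by
  refine List.ext_getElem (by rw [length_toSteps, hl]) fun i _ _ => ?_
  simp only [toSteps, ofSteps, List.getElem_ofFn]
  rcases l[i].dichotomy with h | h <;> simp [h]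

lemma ofSteps_toSteps (w : Fin n → Bool) : ofSteps (toSteps w) (length_toSteps w) = w := by
  funext j
  cases h : w j <;> simp [ofSteps, toSteps, h]

lemma DyckWord.length_eq_two_mul_of_semilength_eq {p : DyckWord} {m : ℕ}
    (hp : p.semilength = m) : p.toList.length = 2 * m := by
  rw [← DyckWord.two_mul_semilength_eq_length, hp]

def dyckWordEquiv (m : ℕ) :
    {w : Fin (2 * m) → Bool // IsDyckWord w} ≃ {p : DyckWord // p.semilength = m} where
  toFun w :=
    have hw := (isDyckWord_iff_toSteps w.1).1 w.2
    ⟨⟨toSteps w.1, hw.1, hw.2⟩, by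
      have := DyckWord.two_mul_semilength_eq_length (p := ⟨toSteps w.1, hw.1, hw.2⟩)
      rw [length_toSteps] at this
      omega⟩
  invFun p :=
    ⟨ofSteps p.1.toList (DyckWord.length_eq_two_mul_of_semilength_eq p.2),
      (isDyckWord_iff_toSteps _).2 <| by
        rw [toSteps_ofSteps]
        exact ⟨p.1.count_U_eq_count_D, p.1.count_D_le_count_U⟩⟩
  left_inv w := Subtype.ext (ofSteps_toSteps w.1)
  right_inv p := Subtype.ext <| DyckWord.ext <|
    toSteps_ofSteps _ (DyckWord.length_eq_two_mul_of_semilength_eq p.2)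

lemma card_dyckWord_two_mul (m : ℕ) :
    Nat.card {w : Fin (2 * m) → Bool // IsDyckWord w} = catalan m := by
  rw [Nat.card_congr (dyckWordEquiv m), Nat.card_eq_fintype_card,
    DyckWord.card_dyckWord_semilength_eq_catalan]

lemma card_dyckWord_two_mul_add_one (m : ℕ) :
    Nat.card {w : Fin (2 * m + 1) → Bool // IsDyckWord w} = 0 := by
  have : IsEmpty {w : Fin (2 * m + 1) → Bool // IsDyckWord w} := ⟨fun w => by
    have := ups_add_downs w.1 le_rfl
    have := w.2.2
    omega⟩
  exact Nat.card_of_isEmpty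

end DyckWords

section LeftFactors

variable {n : ℕ}

lemma isLeftFactor_snoc_iff {v : Fin n → Bool} {b : Bool} :
    IsLeftFactor (Fin.snoc v b : Fin (n + 1) → Bool) ↔
      IsLeftFactor v ∧ (b = true ∨ ups v n ≠ downs v n) := by
  have agree {i} (hi : i ≤ n) (j) (hj : j < i) :
      (Fin.snoc v b : Fin (n + 1) → Bool) ⟨j, by omega⟩ = v ⟨j, by omega⟩ := by
    simp [Fin.snoc, show j < n by omega]
  have ups_snoc {i} (hi : i ≤ n) := ups_eq_of_agree _ v (by omega) hi (agree hi)
  have downs_snoc {i} (hi : i ≤ n) := downs_eq_of_agree _ v (by omega) hi (agree hi)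
  have ups_last : ups (Fin.snoc v b : Fin (n + 1) → Bool) (n + 1) =
      ups v n + if b then 1 else 0 := by
    rw [ups_succ _ (Nat.lt_succ_self n), ups_snoc le_rfl]
    simp [Fin.snoc]
  have := ups_add_downs (Fin.snoc v b : Fin (n + 1) → Bool) le_rfl
  have := ups_add_downs v le_rfl
  constructor
  · intro h
    refine ⟨fun i hi => ?_, ?_⟩
    · rw [← ups_snoc hi, ← downs_snoc hi]
      exact h i (by omega)
    · cases b
      · have := h (n + 1) le_rfl
        simp only [Bool.false_eq_true, ite_false, false_or] at ups_last ⊢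
        omega
      · exact Or.inl rfl
  · rintro ⟨hv, hb⟩ i hi
    rcases Nat.lt_or_ge i (n + 1) with hi | hi
    · rw [ups_snoc (by omega), downs_snoc (by omega)]
      exact hv i (by omega)
    · have := hv n le_rfl
      obtain rfl : i = n + 1 := by omega
      cases b <;> simp at ups_last hb <;> omega

lemma card_leftFactor_succ (n : ℕ) :
    Nat.card {w : Fin (n + 1) → Bool // IsLeftFactor w} =
      Nat.card {v : Fin n → Bool // IsLeftFactor v} +
        Nat.card {v : Fin n → Bool // IsLeftFactor v ∧ ups v n ≠ downs v n} := by
  have e := (Equiv.subtypeProdEquivSigmaSubtype fun (b : Bool) (v : Fin n → Bool) =>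
    IsLeftFactor v ∧ (b = true ∨ ups v n ≠ downs v n)).symm.trans <|
      (Fin.snocEquiv fun _ => Bool).subtypeEquiv fun _ => isLeftFactor_snoc_iff.symm
  rw [← Nat.card_congr e, Nat.card_sigma, Fintype.sum_bool]
  simp only [true_or, and_true, Bool.false_eq_true, false_or]

lemma card_leftFactor_eq_card_dyckWord_add (n : ℕ) :
    Nat.card {v : Fin n → Bool // IsLeftFactor v} =
      Nat.card {v : Fin n → Bool // IsDyckWord v} +
        Nat.card {v : Fin n → Bool // IsLeftFactor v ∧ ups v n ≠ downs v n} :=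
  (Nat.card_congr <|
    (Equiv.sumCompl fun v : {v // IsLeftFactor v} => ups v.1 n = downs v.1 n).symm.trans <|
    Equiv.sumCongr (Equiv.subtypeSubtypeEquivSubtypeInter _ fun v => ups v n = downs v n)
      (Equiv.subtypeSubtypeEquivSubtypeInter _ fun v => ups v n ≠ downs v n)).trans
        (Nat.card_sum ..)

end LeftFactors

lemma choose_two_mul_add_one_add_catalan (m : ℕ) :
    (2 * m + 1).choose m + catalan m = 2 * (2 * m).choose m := by
  have hcat := succ_mul_catalan_eq_centralBinom m
  have hchoose := Nat.add_one_mul_choose_eq (2 * m) m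
  rw [Nat.centralBinom_eq_two_mul_choose] at hcat
  rw [Nat.choose_symm_half] at hchoose
  apply Nat.eq_of_mul_eq_mul_left (Nat.succ_pos m)
  nlinarith

lemma choose_two_mul_add_two_eq (m : ℕ) :
    (2 * m + 2).choose (m + 1) = 2 * (2 * m + 1).choose m := by
  rw [Nat.choose_succ_succ', Nat.choose_symm_half, ← two_mul]

lemma card_leftFactor_zero : Nat.card {w : Fin 0 → Bool // IsLeftFactor w} = 1 := by
  have hall (w : Fin 0 → Bool) : IsLeftFactor w := fun i hi => by
    obtain rfl : i = 0 := by omega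
    simp [downs_eq_ups_not, ups_zero]
  rw [Nat.card_congr (Equiv.subtypeUnivEquiv hall), Nat.card_unique]

lemma card_leftFactor (n : ℕ) :
    Nat.card {w : Fin n → Bool // IsLeftFactor w} = n.choose (n / 2) := by
  induction n with
  | zero => exact card_leftFactor_zero
  | succ n ih =>
    have hsucc := card_leftFactor_succ n
    have hsplit := card_leftFactor_eq_card_dyckWord_add n
    rcases Nat.even_or_odd' n with ⟨m, rfl | rfl⟩
    · have := choose_two_mul_add_one_add_catalan m
      rw [card_dyckWord_two_mul] at hsplit
      rw [show (2 * m + 1) / 2 = m by omega]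
      rw [show 2 * m / 2 = m by omega] at ih
      omega
    · rw [card_dyckWord_two_mul_add_one] at hsplit
      rw [show (2 * m + 1 + 1) / 2 = m + 1 by omega, choose_two_mul_add_two_eq]
      rw [show (2 * m + 1) / 2 = m by omega] at ih
      omega

/-- The number of vertically symmetric Dyck paths of length `2k` (Dyck words fixed by
reversal composed with up/down swap) equals `C(k, k/2)` if `k` is even and
`(1/2) C(k+1, (k+1)/2)` if `k` is odd. -/
theorem stmt6 (k : ℕ) :
    Nat.card {w : Fin (2 * k) → Bool // IsDyckWord w ∧ revSwap w = w} =
      if Even k then k.choose (k / 2) else (k + 1).choose ((k + 1) / 2) / 2 := by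
  rw [card_symmetric_dyckWord_eq_card_leftFactor, card_leftFactor]
  split_ifs with hk
  · rfl
  · obtain ⟨m, rfl⟩ := Nat.not_even_iff_odd.mp hk
    rw [show (2 * m + 1 + 1) / 2 = m + 1 by omega, choose_two_mul_add_two_eq,
      show (2 * m + 1) / 2 = m by omega]
    omega
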